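/- arXiv:2205.09174 — 5 statements merged into one kernel-verified Lean document; each statement's English description precedes it below -/
import Mathlib

section
/- If a miner p approves, via two p-blocks b' and b'', both blocks b₁ and b₂ of an equivocation, then p is an equivocator, i.e., the p-blocks b' and b'' themselves form an equivocation. -/
theorem approving_equivocation_makes_equivocator
    {Block M : Type*} (succ : Block → Block → Prop) (creator : Block → M)
    (htrans : Transitive succ)
    -- equivocation: distinct blocks by the same creator, neither acknowledges the other
    (equiv : Block → Block → Prop)
    (hequiv : ∀ b₁ b₂, equiv b₁ b₂ ↔
      b₁ ≠ b₂ ∧ creator b₁ = creator b₂ ∧ ¬ succ b₁ b₂ ∧ ¬ succ b₂ b₁)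
    -- approval: b approves b₁ if b ≻ b₁ and b acknowledges no block conflicting with b₁
    (approves : Block → Block → Prop)
    (happroves : ∀ b b₁, approves b b₁ ↔
      succ b b₁ ∧ ∀ b₂, succ b b₂ → ¬ equiv b₁ b₂)
    (p : M) (b' b'' b₁ b₂ : Block)
    (hcb' : creator b' = p) (hcb'' : creator b'' = p)
    (h₁ : approves b' b₁) (h₂ : approves b'' b₂)
    (h₁₂ : equiv b₁ b₂) :
    equiv b' b'' := by
  rw [happroves] at h₁ h₂
  obtain ⟨hs1, hn1⟩ := h₁
  obtain ⟨hs2, hn2⟩ := h₂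
  have h₂₁ : equiv b₂ b₁ := by
    rw [hequiv] at h₁₂ ⊢
    tauto
  have hns12 : ¬ succ b' b₂ := fun h => hn1 b₂ h h₁₂
  have hns21 : ¬ succ b'' b₁ := fun h => hn2 b₁ h h₂₁
  rw [hequiv]
  refine ⟨?_, hcb'.trans hcb''.symm, ?_, ?_⟩
  · rintro rfl; exact hns12 hs2
  · intro h; exact hns12 (htrans h hs2)
  · intro h; exact hns21 (htrans h hs1)
end

section
/- If at most f miners are equivocators in a blocklace B containing an equivocation b, b', then it is not the case that both b and b' receive approval from supermajorities (sets of at least 2f+1 miners) in B. -/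
theorem no_supermajority_approval_for_equivocation
    {Block M : Type*} [Fintype M] (f : ℕ)
    (hM : Fintype.card M = 3 * f + 1)
    (succ : Block → Block → Prop) (creator : Block → M)
    (htrans : Transitive succ)
    (equiv : Block → Block → Prop)
    (hequiv : ∀ b₁ b₂, equiv b₁ b₂ ↔
      b₁ ≠ b₂ ∧ creator b₁ = creator b₂ ∧ ¬ succ b₁ b₂ ∧ ¬ succ b₂ b₁)
    (approves : Block → Block → Prop)
    (happroves : ∀ b b₁, approves b b₁ ↔
      succ b b₁ ∧ ∀ b₂, succ b b₂ → ¬ equiv b₁ b₂)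
    -- a miner approves a block if one of its blocks approves it
    (minerApproves : M → Block → Prop)
    (hminer : ∀ p b, minerApproves p b ↔ ∃ b', creator b' = p ∧ approves b' b)
    -- at most f miners are equivocators
    (hfew : Set.ncard {p : M | ∃ b₁ b₂, creator b₁ = p ∧ creator b₂ = p ∧ equiv b₁ b₂} ≤ f)
    (b b' : Block) (hbb' : equiv b b') :
    ¬ (2 * f + 1 ≤ Set.ncard {p : M | minerApproves p b} ∧
       2 * f + 1 ≤ Set.ncard {p : M | minerApproves p b'}) := by
  rintro ⟨h1, h2⟩
  set A : Set M := {p : M | minerApproves p b} with hA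
  set A' : Set M := {p : M | minerApproves p b'} with hA'
  set E : Set M := {p : M | ∃ b₁ b₂, creator b₁ = p ∧ creator b₂ = p ∧ equiv b₁ b₂} with hE
  have hbb'symm : equiv b' b := by
    rw [hequiv] at hbb' ⊢
    exact ⟨hbb'.1.symm, hbb'.2.1.symm, hbb'.2.2.2, hbb'.2.2.1⟩
  have hsub : A ∩ A' ⊆ E := by
    rintro p ⟨hp, hp'⟩
    obtain ⟨c, hc, hac⟩ := (hminer p b).mp hp
    obtain ⟨c', hc', hac'⟩ := (hminer p b').mp hp'
    rw [happroves] at hac hac'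
    refine ⟨c, c', hc, hc', (hequiv c c').mpr ⟨?_, hc.trans hc'.symm, ?_, ?_⟩⟩
    · rintro rfl
      exact hac.2 b' hac'.1 hbb'
    · intro hs
      exact hac.2 b' (htrans hs hac'.1) hbb'
    · intro hs
      exact hac'.2 b (htrans hs hac.1) hbb'symm
  have hfin : ∀ s : Set M, s.Finite := fun s => s.toFinite
  have hkey : (A ∪ A').ncard + (A ∩ A').ncard = A.ncard + A'.ncard :=
    Set.ncard_union_add_ncard_inter A A' (hfin A) (hfin A')
  have hU : (A ∪ A').ncard ≤ 3 * f + 1 := by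
    calc (A ∪ A').ncard ≤ (Set.univ : Set M).ncard :=
          Set.ncard_le_ncard (Set.subset_univ _) (hfin _)
      _ = 3 * f + 1 := by rw [Set.ncard_univ, Nat.card_eq_fintype_card, hM]
  have hI : (A ∩ A').ncard ≤ f :=
    le_trans (Set.ncard_le_ncard hsub (hfin _)) hfew
  omega
end

section
/- Let τ'(b) be defined recursively on leader blocks by: τ'(b) = s([b]) if [b] contains no leader ratified by b, and τ'(b) = τ'(b') · s([b] \ [b']) where b' is the deepest leader in [b] ratified by b. Then for any leader block b and any leader b' ratified by b occurring in the recursion, τ'(b') is a prefix of τ'(b). -/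
theorem tau'_prefix_along_ratified_chain
    {Block : Type*}
    (cl : Block → Set Block)               -- closure [b]
    (s : Set Block → List Block)           -- fixed topological sort
    (next : Block → Option Block)          -- deepest leader in [b] ratified by b, if any
    (τ' : Block → List Block)
    (hτ' : ∀ b, τ' b = (next b).elim (s (cl b)) (fun b' => τ' b' ++ s (cl b \ cl b')))
    (b b' : Block)
    -- b' occurs in the recursion unfolding from b
    (hchain : Relation.ReflTransGen (fun x y => next x = some y) b b') :
    τ' b' <+: τ' b := by
  induction hchain with
  | refl => exact List.prefix_refl _
  | tail hbc hstep ih =>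
    rename_i c d
    refine List.IsPrefix.trans ?_ ih
    have := hτ' c
    rw [hstep] at this
    rw [this]
    exact ⟨_, rfl⟩
end

section
/- In a blocklace where at most f of 3f+1 miners are equivocators, if a block b is ratified (approved by a supermajority of miners), then for any block b'' forming an equivocation with b, b'' is not ratified. -/
theorem equivocating_block_of_ratified_not_ratified
    {Block M : Type*} [Fintype M] (f : ℕ)
    (hM : Fintype.card M = 3 * f + 1)
    (succ : Block → Block → Prop) (creator : Block → M)
    (htrans : Transitive succ)
    (equiv : Block → Block → Prop)
    (hequiv : ∀ b₁ b₂, equiv b₁ b₂ ↔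
      b₁ ≠ b₂ ∧ creator b₁ = creator b₂ ∧ ¬ succ b₁ b₂ ∧ ¬ succ b₂ b₁)
    (approves : Block → Block → Prop)
    (happroves : ∀ b₁ b, approves b₁ b ↔
      succ b₁ b ∧ ∀ b₂, succ b₁ b₂ → ¬ equiv b b₂)
    (minerApproves : M → Block → Prop)
    (hminer : ∀ p b, minerApproves p b ↔ ∃ b', creator b' = p ∧ approves b' b)
    (ratified : Block → Prop)
    (hratified : ∀ b, ratified b ↔ 2 * f + 1 ≤ Set.ncard {p : M | minerApproves p b})
    -- at most f miners are equivocators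
    (hfew : Set.ncard {p : M | ∃ b₁ b₂, creator b₁ = p ∧ creator b₂ = p ∧ equiv b₁ b₂} ≤ f)
    (b b'' : Block) (hb : ratified b) (hconf : equiv b b'') :
    ¬ ratified b'' := by
  intro hb''
  rw [hratified] at hb hb''
  set A : Set M := {p : M | minerApproves p b} with hA
  set B : Set M := {p : M | minerApproves p b''} with hB
  set E : Set M := {p : M | ∃ b₁ b₂, creator b₁ = p ∧ creator b₂ = p ∧ equiv b₁ b₂} with hE
  have hsymm : equiv b'' b := by
    rw [hequiv] at hconf ⊢; tauto
  -- any miner approving both b and b'' is an equivocator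
  have hsub : A ∩ B ⊆ E := by
    rintro p ⟨hpA, hpB⟩
    rw [hA, Set.mem_setOf_eq, hminer] at hpA
    rw [hB, Set.mem_setOf_eq, hminer] at hpB
    obtain ⟨b₁, hc₁, ha₁⟩ := hpA
    obtain ⟨b₂, hc₂, ha₂⟩ := hpB
    rw [happroves] at ha₁ ha₂
    obtain ⟨hs₁, hn₁⟩ := ha₁
    obtain ⟨hs₂, hn₂⟩ := ha₂
    refine ⟨b₁, b₂, hc₁, hc₂, ?_⟩
    rw [hequiv]
    have hne : b₁ ≠ b₂ := by
      rintro rfl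
      exact hn₁ b'' hs₂ hconf
    refine ⟨hne, hc₁.trans hc₂.symm, ?_, ?_⟩
    · intro h12
      exact hn₁ b'' (htrans h12 hs₂) hconf
    · intro h21
      exact hn₂ b (htrans h21 hs₁) hsymm
  have hfinA : A.Finite := Set.toFinite _
  have hfinB : B.Finite := Set.toFinite _
  have hcap : (A ∩ B).ncard ≤ f := le_trans (Set.ncard_le_ncard hsub (Set.toFinite _)) hfew
  have hcup : (A ∪ B).ncard ≤ 3 * f + 1 := by
    have h1 : (A ∪ B).ncard ≤ (Set.univ : Set M).ncard :=
      Set.ncard_le_ncard (Set.subset_univ _) (Set.toFinite _)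
    simpa [Set.ncard_univ, Nat.card_eq_fintype_card, hM] using h1
  have := Set.ncard_union_add_ncard_inter A B hfinA hfinB
  omega
end

section
/- Fairness of τ: if block b is acknowledged by the last finalized leader b* in B (i.e., b ∈ [b*]), then b appears in the output sequence τ(B), where τ(B) = τ'(b*) and τ' recursively outputs, for a chain of ratified leaders b₀ ≺ b₁ ≺ ... ≺ b_k = b*, the concatenation s([b₀]) · s([b₁]\[b₀]) · ... · s([b_k]\[b_{k-1}]), with s a topological sort whose output contains exactly the elements of its input set. -/
/-- Sequence obtained by concatenating the topological sorts of the
`Okazaki fragments' along a chain of ratified leaders. -/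
def chainSeq {Block : Type*} (s : Set Block → List Block) (cl : Block → Set Block) :
    Option Block → List Block → List Block
  | _, [] => []
  | prev, b :: rest =>
      s (cl b \ (prev.elim ∅ cl)) ++ chainSeq s cl (some b) rest

lemma chainSeq_aux {Block : Type*} (cl : Block → Set Block) (s : Set Block → List Block)
    (hs : ∀ S : Set Block, ∀ x, x ∈ s S ↔ x ∈ S) :
    ∀ (L : List Block) (hL : L ≠ []) (prev : Option Block) (b : Block),
      b ∈ cl (L.getLast hL) → b ∈ chainSeq s cl prev L ∨ b ∈ prev.elim ∅ cl := by
  intro L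
  induction L with
  | nil => intro h; exact absurd rfl h
  | cons a rest ih =>
    intro hL prev b hb
    cases rest with
    | nil =>
      simp only [List.getLast_singleton] at hb
      by_cases hp : b ∈ prev.elim ∅ cl
      · exact Or.inr hp
      · left
        simp only [chainSeq, List.mem_append]
        exact Or.inl ((hs _ _).mpr ⟨hb, hp⟩)
    | cons c rest' =>
      have hb' : b ∈ cl ((c :: rest').getLast (by simp)) := by
        rwa [List.getLast_cons] at hb
      rcases ih (by simp) (some a) b hb' with h | h
      · left; exact List.mem_append_right _ h
      · simp only [Option.elim] at h
        by_cases hp : b ∈ prev.elim ∅ cl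
        · exact Or.inr hp
        · left
          simp only [chainSeq, List.mem_append]
          exact Or.inl ((hs _ _).mpr ⟨h, hp⟩)

theorem fairness_of_tau
    {Block : Type*}
    (cl : Block → Set Block)
    (s : Set Block → List Block)
    -- the topological sort of a set contains exactly the elements of the set
    (hs : ∀ S : Set Block, ∀ x, x ∈ s S ↔ x ∈ S)
    -- the chain b₀ ≺ b₁ ≺ ... ≺ b_k = b* of ratified leaders inside [b*]
    (L : List Block) (bstar : Block)
    (hL : L ≠ []) (hlast : L.getLast hL = bstar)
    (hchain : List.Chain' (fun x y => cl x ⊆ cl y) L)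
    (b : Block) (hb : b ∈ cl bstar) :
    b ∈ chainSeq s cl none L := by
  rcases chainSeq_aux cl s hs L hL none b (by rwa [hlast]) with h | h
  · exact h
  · simp at h
end
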